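/- Let T₂^high = [−π/2, 3π/2)² \ [−π/2, π/2)². Define μ(ω) = sup_{(θ₁,θ₂) ∈ T₂^high} |1 − ω · (1/12)(7 + 2(cos θ₁ + cos θ₂) + cos θ₁ cos θ₂)(2 − cos θ₁ − cos θ₂)| for ω ∈ ℝ. Then μ(24/25) = 7/25, and μ(ω) > 7/25 for every real ω ≠ 24/25. In other words, the optimal smoothing factor of the element-wise additive Vanka relaxation for the 2D Laplacian is 7/25, uniquely achieved at ω = 24/25. -/
import Mathlib


open Real

def T2high : Set (ℝ × ℝ) :=
  (Set.Ico (-(π / 2)) (3 * π / 2) ×ˢ Set.Ico (-(π / 2)) (3 * π / 2)) \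
    (Set.Ico (-(π / 2)) (π / 2) ×ˢ Set.Ico (-(π / 2)) (π / 2))

noncomputable def muE2 (ω : ℝ) : ℝ :=
  sSup ((fun θ : ℝ × ℝ =>
    |1 - ω * ((1 / 12) * (7 + 2 * (cos θ.1 + cos θ.2) + cos θ.1 * cos θ.2) *
      (2 - cos θ.1 - cos θ.2))|) '' T2high)

lemma vanka_upper (a b : ℝ) (ha : -1≤a) (ha' : a≤1) (hb : -1≤b) (hb' : b≤1) :
    (7+2*(a+b)+a*b)*(2-a-b) ≤ 16 := by
  nlinarith [sq_nonneg (a+b+2), sq_nonneg (a-b), sq_nonneg (a+1), sq_nonneg (b+1),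
    mul_nonneg (sub_nonneg.2 ha') (sub_nonneg.2 hb'), sq_nonneg (a*b-1)]

lemma vanka_lower (a b : ℝ) (ha : -1≤a) (ha' : a≤1) (hb : -1≤b) (hb0 : b ≤ 0) :
    9 ≤ (7+2*(a+b)+a*b)*(2-a-b) := by
  nlinarith [mul_nonneg (sub_nonneg.2 ha') (neg_nonneg.2 hb0), sq_nonneg (1-a), sq_nonneg b,
    mul_nonneg (mul_nonneg (sub_nonneg.2 ha') (sub_nonneg.2 ha')) (neg_nonneg.2 hb0),
    mul_nonneg (sub_nonneg.2 ha') (sq_nonneg b)]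

lemma vanka_lower' (a b : ℝ) (ha : -1≤a) (ha' : a≤1) (hb : -1≤b) (hb' : b≤1)
    (h : a ≤ 0 ∨ b ≤ 0) :
    9 ≤ (7+2*(a+b)+a*b)*(2-a-b) := by
  rcases h with h | h
  · have := vanka_lower b a hb hb' ha h
    nlinarith [this]
  · exact vanka_lower a b ha ha' hb h

lemma F_bounds {θ : ℝ × ℝ} (h : θ ∈ T2high) :
    3/4 ≤ (1 / 12) * (7 + 2 * (cos θ.1 + cos θ.2) + cos θ.1 * cos θ.2) *
      (2 - cos θ.1 - cos θ.2) ∧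
    (1 / 12) * (7 + 2 * (cos θ.1 + cos θ.2) + cos θ.1 * cos θ.2) *
      (2 - cos θ.1 - cos θ.2) ≤ 4/3 := by
  simp only [T2high, Set.mem_diff, Set.mem_prod, Set.mem_Ico, not_and_or, not_and, not_lt,
    not_le] at h
  obtain ⟨⟨⟨h1l, h1r⟩, ⟨h2l, h2r⟩⟩, hno⟩ := h
  have hc1 : -1 ≤ cos θ.1 := neg_one_le_cos θ.1
  have hc1' : cos θ.1 ≤ 1 := cos_le_one θ.1
  have hc2 : -1 ≤ cos θ.2 := neg_one_le_cos θ.2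
  have hc2' : cos θ.2 ≤ 1 := cos_le_one θ.2
  have hor : cos θ.1 ≤ 0 ∨ cos θ.2 ≤ 0 := by
    rcases hno with (hno | hno) | (hno | hno)
    · linarith
    · exact Or.inl (cos_nonpos_of_pi_div_two_le_of_le hno (by linarith))
    · linarith
    · exact Or.inr (cos_nonpos_of_pi_div_two_le_of_le hno (by linarith))
  have hlo := vanka_lower' (cos θ.1) (cos θ.2) hc1 hc1' hc2 hc2' hor
  have hhi := vanka_upper (cos θ.1) (cos θ.2) hc1 hc1' hc2 hc2'
  constructor <;> nlinarith

lemma mem_pp : ((π, π) : ℝ × ℝ) ∈ T2high := by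
  have hπ := pi_pos
  simp only [T2high, Set.mem_diff, Set.mem_prod, Set.mem_Ico]
  constructor
  · constructor <;> constructor <;> linarith
  · intro ⟨⟨_, h⟩, _⟩
    linarith

lemma mem_h0 : ((π / 2, 0) : ℝ × ℝ) ∈ T2high := by
  have hπ := pi_pos
  simp only [T2high, Set.mem_diff, Set.mem_prod, Set.mem_Ico]
  constructor
  · constructor <;> constructor <;> linarith
  · intro ⟨⟨_, h⟩, _⟩
    linarith

lemma val_pp (ω : ℝ) :
    (fun θ : ℝ × ℝ =>
      |1 - ω * ((1 / 12) * (7 + 2 * (cos θ.1 + cos θ.2) + cos θ.1 * cos θ.2) *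
        (2 - cos θ.1 - cos θ.2))|) (π, π) = |1 - ω * (4/3)| := by
  simp [cos_pi]
  norm_num

lemma val_h0 (ω : ℝ) :
    (fun θ : ℝ × ℝ =>
      |1 - ω * ((1 / 12) * (7 + 2 * (cos θ.1 + cos θ.2) + cos θ.1 * cos θ.2) *
        (2 - cos θ.1 - cos θ.2))|) (π / 2, 0) = |1 - ω * (3/4)| := by
  simp [cos_pi_div_two, cos_zero]
  norm_num

lemma bdd (ω : ℝ) : BddAbove ((fun θ : ℝ × ℝ =>
    |1 - ω * ((1 / 12) * (7 + 2 * (cos θ.1 + cos θ.2) + cos θ.1 * cos θ.2) *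
      (2 - cos θ.1 - cos θ.2))|) '' T2high) := by
  refine ⟨1 + |ω| * 2, ?_⟩
  rintro x ⟨θ, hθ, rfl⟩
  obtain ⟨h1, h2⟩ := F_bounds hθ
  calc |1 - ω * ((1 / 12) * (7 + 2 * (cos θ.1 + cos θ.2) + cos θ.1 * cos θ.2) *
      (2 - cos θ.1 - cos θ.2))| ≤ |(1:ℝ)| + |ω * ((1 / 12) * (7 + 2 * (cos θ.1 + cos θ.2) + cos θ.1 * cos θ.2) *
      (2 - cos θ.1 - cos θ.2))| := abs_sub _ _
    _ ≤ 1 + |ω| * 2 := by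
        rw [abs_one, abs_mul]
        have : |(1 / 12) * (7 + 2 * (cos θ.1 + cos θ.2) + cos θ.1 * cos θ.2) *
            (2 - cos θ.1 - cos θ.2)| ≤ 2 := by
          rw [abs_le]; constructor <;> linarith
        nlinarith [abs_nonneg ω]

theorem stmt_6 :
    muE2 (24 / 25) = 7 / 25 ∧ ∀ ω : ℝ, ω ≠ 24 / 25 → 7 / 25 < muE2 ω := by
  constructor
  · apply le_antisymm
    · apply csSup_le ⟨_, Set.mem_image_of_mem _ mem_pp⟩
      rintro x ⟨θ, hθ, rfl⟩
      obtain ⟨h1, h2⟩ := F_bounds hθ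
      rw [abs_le]
      constructor <;> linarith
    · have h := le_csSup (bdd (24/25)) (Set.mem_image_of_mem _ mem_pp)
      simp only [cos_pi] at h
      rw [muE2]
      refine le_trans ?_ h
      rw [le_abs]; right; norm_num
  · intro ω hω
    rcases lt_or_gt_of_ne hω with h | h
    · have hle := le_csSup (bdd ω) (Set.mem_image_of_mem _ mem_h0)
      simp only [cos_pi_div_two, cos_zero] at hle
      rw [muE2]
      refine lt_of_lt_of_le ?_ hle
      rw [lt_abs]; left; norm_num; linarith
    · have hle := le_csSup (bdd ω) (Set.mem_image_of_mem _ mem_pp)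
      simp only [cos_pi] at hle
      rw [muE2]
      refine lt_of_lt_of_le ?_ hle
      rw [lt_abs]; right; norm_num; linarith
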